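/- Let α ∈ [0, π/2) and let A be an n×n complex matrix with W(A) ⊆ S_α, partitioned into 2×2 blocks with A_{11} square. Then sec²(α) · (Re A)/(Re A_{11}) ≥ Re(A/A_{11}) in the Loewner order. -/

import Mathlib

/-!
Write `H = Re A`, `K = Im A`, and for a vector `y` let `z`, `z₀` be the vectors with second block
`y` for which `A z` and `H z₀` vanish on the first block. Then `yᴴ (A/A₁₁) y = zᴴ A z` and
`yᴴ (H/H₁₁) y = z₀ᴴ H z₀ = b`; since `w = z - z₀` lives in the first block,
`Re (zᴴ A z) = b + a` with `a = wᴴ H w`. From `wᴴ A z = 0` one gets `a = Im (wᴴ K z₀)`, and the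
sector condition `|xᴴ K x| ≤ tan α · xᴴ H x` gives, by Cauchy–Schwarz, `a² ≤ tan² α · a b`.
Hence `Re (yᴴ (A/A₁₁) y) ≤ (1 + tan² α) b = sec² α · yᴴ (H/H₁₁) y`.
-/

open Matrix ComplexOrder

/-- The numerical range (field of values) of a complex matrix. -/
def numericalRange {m : Type*} [Fintype m] (A : Matrix m m ℂ) : Set ℂ :=
  {z | ∃ x : m → ℂ, star x ⬝ᵥ x = 1 ∧ z = star x ⬝ᵥ A.mulVec x}

/-- The sector `S_α` of half-angle `α` around the positive real axis. -/
def sector (α : ℝ) : Set ℂ :=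
  {z | 0 < z.re ∧ |z.im| ≤ z.re * Real.tan α}

/-- The Schur complement `A/A₁₁ = A₂₂ - A₂₁ A₁₁⁻¹ A₁₂` of the (1,1) block. -/
noncomputable def schur {p q : ℕ} (A : Matrix (Fin p ⊕ Fin q) (Fin p ⊕ Fin q) ℂ) :
    Matrix (Fin q) (Fin q) ℂ :=
  A.toBlocks₂₂ - A.toBlocks₂₁ * (A.toBlocks₁₁)⁻¹ * A.toBlocks₁₂

/-- The Hermitian real part `(A + Aᴴ)/2` of a complex matrix. -/
noncomputable def matRe {m : Type*} [Fintype m] (A : Matrix m m ℂ) : Matrix m m ℂ :=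
  (1 / 2 : ℂ) • (A + Aᴴ)

open ComplexStarModule

section QuadraticForm

variable {m : Type*}

lemma isHermitian_realPart (A : Matrix m m ℂ) : (ℜ A : Matrix m m ℂ).IsHermitian := (ℜ A).2

lemma isHermitian_imaginaryPart (A : Matrix m m ℂ) : (ℑ A : Matrix m m ℂ).IsHermitian := (ℑ A).2

variable [Fintype m]

lemma star_smul_dotProduct_mulVec_smul (M : Matrix m m ℂ) (c : ℂ) (x : m → ℂ) :
    star (c • x) ⬝ᵥ M *ᵥ (c • x) = star c * c * (star x ⬝ᵥ M *ᵥ x) := by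
  rw [star_smul, smul_dotProduct, mulVec_smul, dotProduct_smul, smul_eq_mul, smul_eq_mul]
  ring

lemma Matrix.IsHermitian.star_dotProduct_mulVec_comm {M : Matrix m m ℂ} (hM : M.IsHermitian)
    (u v : m → ℂ) : star v ⬝ᵥ M *ᵥ u = star (star u ⬝ᵥ M *ᵥ v) := by
  rw [star_dotProduct, star_mulVec, ← dotProduct_mulVec, hM.eq]

lemma posSemidef_iff_re_dotProduct_mulVec_nonneg {M : Matrix m m ℂ} :
    M.PosSemidef ↔ M.IsHermitian ∧ ∀ x, 0 ≤ (star x ⬝ᵥ M *ᵥ x).re := by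
  rw [posSemidef_iff_dotProduct_mulVec]
  refine and_congr_right fun hM => forall_congr' fun x => ?_
  rw [Complex.nonneg_iff, ← RCLike.im_to_complex, hM.im_star_dotProduct_mulVec_self]
  simp

lemma matRe_eq_realPart (A : Matrix m m ℂ) : matRe A = (ℜ A : Matrix m m ℂ) := by
  rw [matRe, realPart_apply_coe, star_eq_conjTranspose]
  ext i j
  simp [mul_add]

lemma isHermitian_matRe (A : Matrix m m ℂ) : (matRe A).IsHermitian :=
  matRe_eq_realPart A ▸ isHermitian_realPart A

lemma dotProduct_mulVec_eq_realPart_add_imaginaryPart (A : Matrix m m ℂ) (u v : m → ℂ) :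
    star u ⬝ᵥ A *ᵥ v
      = star u ⬝ᵥ (ℜ A : Matrix m m ℂ) *ᵥ v
        + Complex.I * (star u ⬝ᵥ (ℑ A : Matrix m m ℂ) *ᵥ v) := by
  conv_lhs => rw [← realPart_add_I_smul_imaginaryPart A]
  rw [add_mulVec, smul_mulVec, dotProduct_add, dotProduct_smul, smul_eq_mul]

lemma re_dotProduct_mulVec_matRe (A : Matrix m m ℂ) (x : m → ℂ) :
    (star x ⬝ᵥ matRe A *ᵥ x).re = (star x ⬝ᵥ A *ᵥ x).re := by
  rw [dotProduct_mulVec_eq_realPart_add_imaginaryPart A, matRe_eq_realPart, Complex.add_re,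
    Complex.I_mul_re, ← RCLike.im_to_complex,
    (isHermitian_imaginaryPart A).im_star_dotProduct_mulVec_self]
  simp

lemma re_dotProduct_mulVec_imaginaryPart (A : Matrix m m ℂ) (x : m → ℂ) :
    (star x ⬝ᵥ (ℑ A : Matrix m m ℂ) *ᵥ x).re = (star x ⬝ᵥ A *ᵥ x).im := by
  rw [dotProduct_mulVec_eq_realPart_add_imaginaryPart A, Complex.add_im, Complex.I_mul_im,
    ← RCLike.im_to_complex, (isHermitian_realPart A).im_star_dotProduct_mulVec_self]
  simp

end QuadraticForm

section Sector

variable {m : Type*} [Fintype m] {α : ℝ}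

lemma ofReal_mul_mem_sector_iff {c : ℝ} (hc : 0 < c) {z : ℂ} :
    (c : ℂ) * z ∈ sector α ↔ z ∈ sector α := by
  simp only [sector, Set.mem_ofPred_eq, Complex.re_ofReal_mul, Complex.im_ofReal_mul, abs_mul,
    abs_of_pos hc, mul_assoc, mul_pos_iff_of_pos_left hc, mul_le_mul_iff_right₀ hc]

lemma dotProduct_mulVec_mem_sector {A : Matrix m m ℂ} (hA : numericalRange A ⊆ sector α)
    {x : m → ℂ} (hx : x ≠ 0) : star x ⬝ᵥ A *ᵥ x ∈ sector α := by
  obtain ⟨hr, hr'⟩ := Complex.lt_def.mp (dotProduct_star_self_pos_iff.mpr hx)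
  set r := (star x ⬝ᵥ x).re
  have hxx : star x ⬝ᵥ x = r := Complex.ext rfl hr'.symm
  set c : ℂ := (((√r)⁻¹ : ℝ) : ℂ)
  have hc : star c * c = ((r⁻¹ : ℝ) : ℂ) := by
    rw [Complex.star_def, Complex.conj_ofReal, ← Complex.ofReal_mul, ← mul_inv,
      Real.mul_self_sqrt hr.le]
  rw [← ofReal_mul_mem_sector_iff (inv_pos.mpr hr), ← hc,
    ← star_smul_dotProduct_mulVec_smul]
  refine hA ⟨c • x, ?_, rfl⟩
  rw [star_smul, smul_dotProduct, dotProduct_smul, smul_eq_mul, smul_eq_mul, ← mul_assoc, hc,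
    hxx, ← Complex.ofReal_mul, inv_mul_cancel₀ hr.ne', Complex.ofReal_one]

lemma abs_im_dotProduct_mulVec_le {A : Matrix m m ℂ} (hA : numericalRange A ⊆ sector α)
    (x : m → ℂ) :
    |(star x ⬝ᵥ A *ᵥ x).im| ≤ Real.tan α * (star x ⬝ᵥ A *ᵥ x).re := by
  rcases eq_or_ne x 0 with rfl | hx
  · simp
  · rw [mul_comm]
    exact (dotProduct_mulVec_mem_sector hA hx).2

end Sector

section CauchySchwarz

variable {m : Type*} [Fintype m]

lemma Matrix.IsHermitian.four_mul_re_dotProduct_mulVec {K : Matrix m m ℂ} (hK : K.IsHermitian)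
    (u v : m → ℂ) :
    4 * (star u ⬝ᵥ K *ᵥ v).re
      = (star (u + v) ⬝ᵥ K *ᵥ (u + v)).re - (star (u - v) ⬝ᵥ K *ᵥ (u - v)).re := by
  have hexpand : star (u + v) ⬝ᵥ K *ᵥ (u + v) - star (u - v) ⬝ᵥ K *ᵥ (u - v)
      = 2 * (star u ⬝ᵥ K *ᵥ v + star v ⬝ᵥ K *ᵥ u) := by
    simp only [mulVec_add, mulVec_sub, star_add, star_sub, add_dotProduct, sub_dotProduct,
      dotProduct_add, dotProduct_sub]
    ring
  rw [← Complex.sub_re, hexpand, hK.star_dotProduct_mulVec_comm u v, Complex.star_def,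
    Complex.add_conj]
  simp only [Complex.mul_re, Complex.re_ofNat, Complex.im_ofNat, Complex.ofReal_re,
    Complex.ofReal_im]
  ring

lemma re_dotProduct_mulVec_parallelogram (H : Matrix m m ℂ) (u v : m → ℂ) :
    (star (u + v) ⬝ᵥ H *ᵥ (u + v)).re + (star (u - v) ⬝ᵥ H *ᵥ (u - v)).re
      = 2 * (star u ⬝ᵥ H *ᵥ u).re + 2 * (star v ⬝ᵥ H *ᵥ v).re := by
  have hexpand : star (u + v) ⬝ᵥ H *ᵥ (u + v) + star (u - v) ⬝ᵥ H *ᵥ (u - v)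
      = 2 * (star u ⬝ᵥ H *ᵥ u) + 2 * (star v ⬝ᵥ H *ᵥ v) := by
    simp only [mulVec_add, mulVec_sub, star_add, star_sub, add_dotProduct, sub_dotProduct,
      dotProduct_add, dotProduct_sub]
    ring
  rw [← Complex.add_re, hexpand]
  simp only [Complex.add_re, Complex.mul_re, Complex.re_ofNat, Complex.im_ofNat, zero_mul,
    sub_zero]

lemma re_star_ofReal_smul_dotProduct_mulVec (M : Matrix m m ℂ) (s : ℝ) (u v : m → ℂ) :
    (star ((s : ℂ) • u) ⬝ᵥ M *ᵥ v).re = s * (star u ⬝ᵥ M *ᵥ v).re := by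
  rw [star_smul, smul_dotProduct, smul_eq_mul, Complex.star_def, Complex.conj_ofReal,
    Complex.re_ofReal_mul]

lemma re_star_ofReal_smul_dotProduct_mulVec_smul (M : Matrix m m ℂ) (s : ℝ) (u : m → ℂ) :
    (star ((s : ℂ) • u) ⬝ᵥ M *ᵥ ((s : ℂ) • u)).re = s * s * (star u ⬝ᵥ M *ᵥ u).re := by
  rw [star_smul_dotProduct_mulVec_smul, Complex.star_def, Complex.conj_ofReal,
    ← Complex.ofReal_mul, Complex.re_ofReal_mul]

/-- Cauchy–Schwarz for a Hermitian form `K` dominated by `t H`: polarization bounds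
`2 Re (uᴴ K v)` by `t (uᴴ H u + vᴴ H v)`, and rescaling `u` by a real `s` turns this into a
nonnegative quadratic in `s`, whose discriminant gives the claim. -/
lemma re_dotProduct_mulVec_sq_le {H K : Matrix m m ℂ} {t : ℝ} (hK : K.IsHermitian)
    (hKH : ∀ x, |(star x ⬝ᵥ K *ᵥ x).re| ≤ t * (star x ⬝ᵥ H *ᵥ x).re) (u v : m → ℂ) :
    (star u ⬝ᵥ K *ᵥ v).re ^ 2 ≤ t ^ 2 * (star u ⬝ᵥ H *ᵥ u).re * (star v ⬝ᵥ H *ᵥ v).re := by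
  have hmean : ∀ u v : m → ℂ,
      2 * (star u ⬝ᵥ K *ᵥ v).re ≤ t * ((star u ⬝ᵥ H *ᵥ u).re + (star v ⬝ᵥ H *ᵥ v).re) := by
    intro u v
    have hpolar := hK.four_mul_re_dotProduct_mulVec u v
    have hpar := congrArg (t * ·) (re_dotProduct_mulVec_parallelogram H u v)
    have hplus := (abs_le.mp (hKH (u + v))).2
    have hminus := (abs_le.mp (hKH (u - v))).1
    linarith
  have hdisc := discrim_le_zero (a := t * (star u ⬝ᵥ H *ᵥ u).re)
    (b := -2 * (star u ⬝ᵥ K *ᵥ v).re) (c := t * (star v ⬝ᵥ H *ᵥ v).re) fun s => by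
      have := hmean ((s : ℂ) • u) v
      rw [re_star_ofReal_smul_dotProduct_mulVec, re_star_ofReal_smul_dotProduct_mulVec_smul]
        at this
      linarith
  rw [discrim] at hdisc
  linarith

end CauchySchwarz

section Sectorial

variable {m : Type*} [Fintype m]

lemma Matrix.IsHermitian.star_add_dotProduct_mulVec_add {H : Matrix m m ℂ}
    (hH : H.IsHermitian) {u w : m → ℂ} (h : star w ⬝ᵥ H *ᵥ u = 0) :
    star (u + w) ⬝ᵥ H *ᵥ (u + w) = star u ⬝ᵥ H *ᵥ u + star w ⬝ᵥ H *ᵥ w := by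
  have h' : star u ⬝ᵥ H *ᵥ w = 0 := by rw [hH.star_dotProduct_mulVec_comm, h, star_zero]
  simp only [mulVec_add, star_add, add_dotProduct, dotProduct_add, h, h']
  ring

/-- The two orthogonality relations turn `Re (wᴴ A w)` into `Im (wᴴ (ℑ A) u)`, which
Cauchy–Schwarz bounds by `t √(Re (wᴴ A w) · Re (uᴴ A u))`. -/
lemma re_dotProduct_mulVec_le_of_orthogonal {A : Matrix m m ℂ} {t : ℝ}
    (hsec : ∀ z, |(star z ⬝ᵥ A *ᵥ z).im| ≤ t * (star z ⬝ᵥ A *ᵥ z).re) {u w : m → ℂ}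
    (hu : 0 ≤ (star u ⬝ᵥ A *ᵥ u).re) (hA : star w ⬝ᵥ A *ᵥ (u + w) = 0)
    (hH : star w ⬝ᵥ matRe A *ᵥ u = 0) :
    (star w ⬝ᵥ A *ᵥ w).re ≤ t ^ 2 * (star u ⬝ᵥ A *ᵥ u).re := by
  set K : Matrix m m ℂ := (ℑ A : Matrix m m ℂ)
  have hwAu : star w ⬝ᵥ A *ᵥ u = Complex.I * (star w ⬝ᵥ K *ᵥ u) := by
    rw [dotProduct_mulVec_eq_realPart_add_imaginaryPart, ← matRe_eq_realPart, hH, zero_add]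
  have ha : (star w ⬝ᵥ A *ᵥ w).re = (star w ⬝ᵥ K *ᵥ (-Complex.I • u)).re := by
    rw [mulVec_add, dotProduct_add, hwAu] at hA
    have hre := congrArg Complex.re hA
    rw [mulVec_smul, dotProduct_smul, smul_eq_mul]
    simp only [Complex.add_re, Complex.I_mul_re, Complex.zero_re, neg_mul, Complex.neg_re]
      at hre ⊢
    linarith
  have hCS := re_dotProduct_mulVec_sq_le (H := A) (isHermitian_imaginaryPart A)
    (fun x => by rw [re_dotProduct_mulVec_imaginaryPart]; exact hsec x) w (-Complex.I • u)
  rw [← ha, star_smul_dotProduct_mulVec_smul] at hCS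
  simp only [star_neg, Complex.star_def, Complex.conj_I, neg_neg, mul_neg, Complex.I_mul_I,
    one_mul] at hCS
  rcases le_or_gt (star w ⬝ᵥ A *ᵥ w).re 0 with ha0 | ha0
  · exact ha0.trans (by positivity)
  · exact le_of_mul_le_mul_left (by linarith) ha0

end Sectorial

section Blocks

variable {m n : Type*} [Fintype m] [Fintype n]

lemma mulVec_sumElim (M : Matrix (m ⊕ n) (m ⊕ n) ℂ) (x : m → ℂ) (y : n → ℂ) :
    M *ᵥ Sum.elim x y
      = Sum.elim (M.toBlocks₁₁ *ᵥ x + M.toBlocks₁₂ *ᵥ y)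
          (M.toBlocks₂₁ *ᵥ x + M.toBlocks₂₂ *ᵥ y) := by
  conv_lhs => rw [← fromBlocks_toBlocks M]
  rw [fromBlocks_mulVec, Sum.elim_comp_inl, Sum.elim_comp_inr]

lemma star_sumElim_zero_dotProduct_sumElim_zero (v : m → ℂ) (x : n → ℂ) :
    star (Sum.elim v 0) ⬝ᵥ Sum.elim 0 x = 0 := by
  simp [Function.star_sumElim, sumElim_dotProduct_sumElim]

lemma isUnit_det_toBlocks₁₁ [DecidableEq m] {M : Matrix (m ⊕ n) (m ⊕ n) ℂ}
    (hM : ∀ z, z ≠ 0 → 0 < (star z ⬝ᵥ M *ᵥ z).re) : IsUnit M.toBlocks₁₁.det := by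
  rw [isUnit_iff_ne_zero]
  intro hdet
  obtain ⟨v, hv, hMv⟩ := exists_mulVec_eq_zero_iff.mpr hdet
  have hz : (Sum.elim v 0 : m ⊕ n → ℂ) ≠ 0 := fun h =>
    hv (funext fun i => congrFun h (Sum.inl i))
  have := hM _ hz
  rw [mulVec_sumElim, hMv, mulVec_zero, add_zero, star_sumElim_zero_dotProduct_sumElim_zero,
    Complex.zero_re] at this
  exact this.false

end Blocks

section SchurComplement

variable {p q : ℕ}

lemma isHermitian_schur {H : Matrix (Fin p ⊕ Fin q) (Fin p ⊕ Fin q) ℂ}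
    (hH : H.IsHermitian) : (schur H).IsHermitian := by
  rw [← fromBlocks_toBlocks H, isHermitian_fromBlocks_iff] at hH
  obtain ⟨h₁₁, h₁₂, -, h₂₂⟩ := hH
  rw [schur, ← h₁₂]
  exact h₂₂.sub (isHermitian_conjTranspose_mul_mul _ h₁₁.inv)

noncomputable def schurVec (M : Matrix (Fin p ⊕ Fin q) (Fin p ⊕ Fin q) ℂ) (y : Fin q → ℂ) :
    Fin p ⊕ Fin q → ℂ :=
  Sum.elim (-(M.toBlocks₁₁⁻¹ * M.toBlocks₁₂) *ᵥ y) y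

variable {M : Matrix (Fin p ⊕ Fin q) (Fin p ⊕ Fin q) ℂ}

lemma mulVec_schurVec (hM : IsUnit M.toBlocks₁₁.det) (y : Fin q → ℂ) :
    M *ᵥ schurVec M y = Sum.elim (0 : Fin p → ℂ) (schur M *ᵥ y) := by
  rw [schurVec, neg_mulVec, mulVec_sumElim, mulVec_neg, mulVec_neg, mulVec_mulVec,
    mulVec_mulVec, ← Matrix.mul_assoc, mul_nonsing_inv _ hM, Matrix.one_mul, neg_add_cancel, schur,
    sub_mulVec, ← Matrix.mul_assoc, neg_add_eq_sub]

lemma star_schurVec_dotProduct_mulVec_schurVec (hM : IsUnit M.toBlocks₁₁.det)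
    (y : Fin q → ℂ) :
    star (schurVec M y) ⬝ᵥ M *ᵥ schurVec M y = star y ⬝ᵥ schur M *ᵥ y := by
  rw [mulVec_schurVec hM, schurVec, Function.star_sumElim, sumElim_dotProduct_sumElim,
    dotProduct_zero, zero_add]

lemma schurVec_sub_schurVec (N : Matrix (Fin p ⊕ Fin q) (Fin p ⊕ Fin q) ℂ) (y : Fin q → ℂ) :
    schurVec M y - schurVec N y
      = Sum.elim ((N.toBlocks₁₁⁻¹ * N.toBlocks₁₂ - M.toBlocks₁₁⁻¹ * M.toBlocks₁₂) *ᵥ y) 0 := by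
  ext (i | i)
  · simp [schurVec, neg_mulVec, sub_mulVec, neg_add_eq_sub]
  · simp [schurVec]

end SchurComplement

lemma re_dotProduct_mulVec_schur_le {p q : ℕ} {A : Matrix (Fin p ⊕ Fin q) (Fin p ⊕ Fin q) ℂ}
    {t : ℝ} (hpos : ∀ z, z ≠ 0 → 0 < (star z ⬝ᵥ A *ᵥ z).re)
    (hsec : ∀ z, |(star z ⬝ᵥ A *ᵥ z).im| ≤ t * (star z ⬝ᵥ A *ᵥ z).re) (y : Fin q → ℂ) :
    (star y ⬝ᵥ schur A *ᵥ y).re ≤ (1 + t ^ 2) * (star y ⬝ᵥ schur (matRe A) *ᵥ y).re := by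
  set H := matRe A
  have hHA : ∀ z, (star z ⬝ᵥ H *ᵥ z).re = (star z ⬝ᵥ A *ᵥ z).re :=
    re_dotProduct_mulVec_matRe A
  have hA₁₁ := isUnit_det_toBlocks₁₁ hpos
  have hH₁₁ := isUnit_det_toBlocks₁₁ (M := H) fun z hz => (hHA z).symm ▸ hpos z hz
  set z₀ := schurVec H y
  set w := schurVec A y - z₀
  have hw : w = Sum.elim _ (0 : Fin q → ℂ) := schurVec_sub_schurVec H y
  have hwHz₀ : star w ⬝ᵥ H *ᵥ z₀ = 0 := by
    rw [hw, mulVec_schurVec hH₁₁, star_sumElim_zero_dotProduct_sumElim_zero]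
  have hwAz : star w ⬝ᵥ A *ᵥ (z₀ + w) = 0 := by
    rw [add_sub_cancel, hw, mulVec_schurVec hA₁₁, star_sumElim_zero_dotProduct_sumElim_zero]
  have hz₀ : 0 ≤ (star z₀ ⬝ᵥ A *ᵥ z₀).re := by
    rcases eq_or_ne z₀ 0 with h | h
    · simp [h]
    · exact (hpos z₀ h).le
  have hgap := re_dotProduct_mulVec_le_of_orthogonal hsec hz₀ hwAz hwHz₀
  have hsplit :
      (star y ⬝ᵥ schur A *ᵥ y).re = (star z₀ ⬝ᵥ A *ᵥ z₀).re + (star w ⬝ᵥ A *ᵥ w).re := by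
    rw [← star_schurVec_dotProduct_mulVec_schurVec hA₁₁, ← add_sub_cancel z₀ (schurVec A y),
      ← hHA, (isHermitian_matRe A).star_add_dotProduct_mulVec_add hwHz₀, Complex.add_re, hHA,
      hHA]
  rw [hsplit, ← star_schurVec_dotProduct_mulVec_schurVec hH₁₁, hHA]
  linarith

theorem sec_sq_schur_re_ge_re_schur {p q : ℕ} (α : ℝ) (hα : α ∈ Set.Ico 0 (Real.pi / 2))
    (A : Matrix (Fin p ⊕ Fin q) (Fin p ⊕ Fin q) ℂ) (hA : numericalRange A ⊆ sector α) :
    (((((Real.cos α)⁻¹ ^ 2 : ℝ) : ℂ) • schur (matRe A)) - matRe (schur A)).PosSemidef := by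
  have hcos : 0 < Real.cos α :=
    Real.cos_pos_of_mem_Ioo ⟨by linarith [hα.1, Real.pi_pos], hα.2⟩
  have hsec : (Real.cos α)⁻¹ ^ 2 = 1 + Real.tan α ^ 2 := by
    rw [inv_pow, ← Real.inv_one_add_tan_sq hcos.ne', inv_inv]
  rw [posSemidef_iff_re_dotProduct_mulVec_nonneg]
  refine ⟨((isHermitian_schur (isHermitian_matRe A)).smul (Complex.conj_ofReal _)).sub
    (isHermitian_matRe _), fun y => ?_⟩
  have := re_dotProduct_mulVec_schur_le (fun z hz => (dotProduct_mulVec_mem_sector hA hz).1)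
    (abs_im_dotProduct_mulVec_le hA) y
  rw [sub_mulVec, dotProduct_sub, Complex.sub_re, re_dotProduct_mulVec_matRe, smul_mulVec,
    dotProduct_smul, smul_eq_mul, Complex.re_ofReal_mul, hsec]
  linarith
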